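/- In a monotonic automaton, every maximal (by inclusion) synchronizing set of states is an interval with respect to the preserved linear order: if S is synchronizing and S ⊆ T for no strictly larger synchronizing set T, then S = [min S, max S]. -/

import Mathlib

theorem Monotone.eq_of_mem_Icc {α β : Type*} [Preorder α] [PartialOrder β] {f : α → β}
    (hf : Monotone f) {a b x : α} (hx : x ∈ Set.Icc a b) (hab : f a = f b) : f x = f a :=
  le_antisymm (hab ▸ hf hx.2) (hf hx.1)

/-- In a monotonic automaton, every maximal (by inclusion) synchronizing set of
states is an interval with respect to the preserved linear order. -/
theorem stmt3 {Q A : Type*} [LinearOrder Q] (δ : Q → A → Q)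
    (hmono : ∀ x : A, Monotone (fun q => δ q x))
    (S : Set Q) (a b : Q) (ha : a ∈ S) (hb : b ∈ S) (hbound : S ⊆ Set.Icc a b)
    (hsync : ∃ (w : List A) (q : Q), ∀ s ∈ S, w.foldl δ s = q)
    (hmaximal : ∀ T : Set Q, S ⊆ T →
      (∃ (w : List A) (q : Q), ∀ s ∈ T, w.foldl δ s = q) → S = T) :
    S = Set.Icc a b := by
  obtain ⟨w, q, hq⟩ := hsync
  have hab : w.foldl δ a = w.foldl δ b := (hq a ha).trans (hq b hb).symm
  refine hmaximal _ hbound ⟨w, q, fun s hs => ?_⟩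
  rw [(List.foldl_monotone hmono w).eq_of_mem_Icc hs hab, hq a ha]
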